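/- For every μ ∈ ℝ and σ > 0, letting G_{ij} = ∫ s_i(x)s_j(x)φ_{μ,σ²}(x) dx (i,j ∈ {1,2}) be the Fisher metric components of the univariate Gaussian family in the coordinates (μ, σ²), one has (σ²)^{3/2}·√(G₁₁G₂₂ − G₁₂²) = 1/√2. In particular the Weyl prior density exp{(n/2)Ω}·√(det G) with n = 2 and potential Ω = (3/2)ln σ² is constant in (μ, σ²), i.e. the Weyl prior of the univariate Gaussian family is the uniform prior. -/

import Mathlib

/-!
The translation `x ↦ x - μ` shows that the Fisher metric does not depend on `μ`. For the centred
density, integration by parts gives the moments `E[X²] = σ²` and `E[X⁴] = 3σ⁴`, while `s₁ s₂ φ` is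
odd, so `G = diag(1/σ², 1/(2σ⁴))`. Hence `det G = 1/(2σ⁶)`, and the factor `(σ²)^{3/2} = σ³`
cancels `√(det G)` up to the constant `1/√2`.
-/

open MeasureTheory Real

/-- The density of the univariate Gaussian distribution N(μ,σ²). -/
noncomputable def gaussPdf (μ σ x : ℝ) : ℝ :=
  1 / (Real.sqrt (2 * Real.pi) * σ) * Real.exp (-(x - μ) ^ 2 / (2 * σ ^ 2))

/-- The score components (s₁, s₂) of the univariate Gaussian log-likelihood in the
coordinates (μ, σ²). -/
noncomputable def score (μ σ : ℝ) : Fin 2 → ℝ → ℝ :=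
  ![fun x => (x - μ) / σ ^ 2, fun x => (x - μ) ^ 2 / (2 * σ ^ 4) - 1 / (2 * σ ^ 2)]

theorem integral_eq_zero_of_odd {G E : Type*} [MeasurableSpace G] [AddGroup G] [MeasurableNeg G]
    [NormedAddCommGroup E] [NormedSpace ℝ E] {μ : Measure G} [μ.IsNegInvariant] {f : G → E}
    (hf : ∀ x, f (-x) = -f x) : ∫ x, f x ∂μ = 0 := by
  have h := integral_neg_eq_self f μ
  simp only [hf, integral_neg] at h
  have h2 : (2 : ℝ) • ∫ x, f x ∂μ = 0 := by
    rw [two_smul]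
    nth_rw 1 [← h]
    exact neg_add_cancel _
  exact (smul_eq_zero.mp h2).resolve_left two_ne_zero

section GaussianMoments

variable {b : ℝ}

theorem integrable_pow_mul_exp_neg_mul_sq (hb : 0 < b) (n : ℕ) :
    Integrable fun x : ℝ => x ^ n * exp (-b * x ^ 2) := by
  simpa [Real.rpow_natCast] using
    integrable_rpow_mul_exp_neg_mul_sq hb (neg_one_lt_zero.trans_le n.cast_nonneg)

theorem hasDerivAt_exp_neg_mul_sq (b x : ℝ) :
    HasDerivAt (fun y : ℝ => exp (-b * y ^ 2)) (-2 * b * x * exp (-b * x ^ 2)) x := by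
  convert ((hasDerivAt_pow 2 x).const_mul (-b)).exp using 1
  ring

/-- Integration by parts: `∫ (x ^ (k + 1) * exp (-b x²))' = 0`. -/
theorem integral_pow_add_two_mul_exp_neg_mul_sq (hb : 0 < b) (k : ℕ) :
    ∫ x : ℝ, x ^ (k + 2) * exp (-b * x ^ 2)
      = (k + 1) / (2 * b) * ∫ x : ℝ, x ^ k * exp (-b * x ^ 2) := by
  have hderiv : ∀ x : ℝ, HasDerivAt (fun y => y ^ (k + 1) * exp (-b * y ^ 2))
      ((k + 1) * (x ^ k * exp (-b * x ^ 2)) - 2 * b * (x ^ (k + 2) * exp (-b * x ^ 2))) x := by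
    intro x
    refine ((hasDerivAt_pow (k + 1) x).mul (hasDerivAt_exp_neg_mul_sq b x)).congr_deriv ?_
    push_cast
    ring
  have hk := integrable_pow_mul_exp_neg_mul_sq hb k
  have hk2 := integrable_pow_mul_exp_neg_mul_sq hb (k + 2)
  have h := integral_eq_zero_of_hasDerivAt_of_integrable hderiv
    ((hk.const_mul _).sub (hk2.const_mul _)) (integrable_pow_mul_exp_neg_mul_sq hb (k + 1))
  rw [integral_sub (hk.const_mul _) (hk2.const_mul _), integral_const_mul,
    integral_const_mul] at h
  rw [div_mul_eq_mul_div, eq_div_iff (by positivity)]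
  linear_combination -h

end GaussianMoments

section CenteredGaussian

variable {σ : ℝ}

theorem gaussPdf_sub (μ σ x : ℝ) : gaussPdf μ σ x = gaussPdf 0 σ (x - μ) := by
  simp [gaussPdf]

theorem score_sub (μ σ : ℝ) (i : Fin 2) (x : ℝ) : score μ σ i x = score 0 σ i (x - μ) := by
  fin_cases i <;> simp [score]

theorem gaussPdf_zero_eq (σ x : ℝ) :
    gaussPdf 0 σ x = (√(2 * π) * σ)⁻¹ * exp (-(2 * σ ^ 2)⁻¹ * x ^ 2) := by
  simp only [gaussPdf, sub_zero, one_div]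
  congr 2
  ring

theorem integral_pow_mul_gaussPdf_zero (σ : ℝ) (n : ℕ) :
    ∫ x, x ^ n * gaussPdf 0 σ x
      = (√(2 * π) * σ)⁻¹ * ∫ x : ℝ, x ^ n * exp (-(2 * σ ^ 2)⁻¹ * x ^ 2) := by
  simp only [gaussPdf_zero_eq, ← integral_const_mul]
  congr 1 with x
  ring

theorem integrable_pow_mul_gaussPdf_zero (hσ : σ ≠ 0) (n : ℕ) :
    Integrable fun x => x ^ n * gaussPdf 0 σ x := by
  simp only [gaussPdf_zero_eq, mul_left_comm _ (√(2 * π) * σ)⁻¹]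
  exact (integrable_pow_mul_exp_neg_mul_sq (by positivity) n).const_mul _

theorem integral_gaussPdf_zero (hσ : 0 < σ) : ∫ x, gaussPdf 0 σ x = 1 := by
  have h := integral_pow_mul_gaussPdf_zero σ 0
  simp only [pow_zero, one_mul, integral_gaussian] at h
  rw [h, div_inv_eq_mul, show π * (2 * σ ^ 2) = 2 * π * σ ^ 2 by ring,
    sqrt_mul' _ (sq_nonneg σ), sqrt_sq hσ.le]
  field_simp

theorem integral_pow_add_two_mul_gaussPdf_zero (hσ : σ ≠ 0) (k : ℕ) :
    ∫ x, x ^ (k + 2) * gaussPdf 0 σ x = (k + 1) * σ ^ 2 * ∫ x, x ^ k * gaussPdf 0 σ x := by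
  rw [integral_pow_mul_gaussPdf_zero, integral_pow_mul_gaussPdf_zero,
    integral_pow_add_two_mul_exp_neg_mul_sq (by positivity)]
  field_simp

theorem integral_sq_mul_gaussPdf_zero (hσ : 0 < σ) : ∫ x, x ^ 2 * gaussPdf 0 σ x = σ ^ 2 := by
  simpa [integral_gaussPdf_zero hσ] using integral_pow_add_two_mul_gaussPdf_zero hσ.ne' 0

theorem integral_pow_four_mul_gaussPdf_zero (hσ : 0 < σ) :
    ∫ x, x ^ 4 * gaussPdf 0 σ x = 3 * σ ^ 4 := by
  rw [integral_pow_add_two_mul_gaussPdf_zero hσ.ne' 2, integral_sq_mul_gaussPdf_zero hσ]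
  push_cast
  ring

theorem integral_even_quartic_mul_gaussPdf_zero (hσ : 0 < σ) (a b c : ℝ) :
    ∫ x, (a * x ^ 4 + b * x ^ 2 + c) * gaussPdf 0 σ x = 3 * a * σ ^ 4 + b * σ ^ 2 + c := by
  have hI := integrable_pow_mul_gaussPdf_zero hσ.ne'
  have h0 : Integrable fun x => gaussPdf 0 σ x := by simpa using hI 0
  have h42 : Integrable fun x => a * (x ^ 4 * gaussPdf 0 σ x) + b * (x ^ 2 * gaussPdf 0 σ x) :=
    ((hI 4).const_mul a).add ((hI 2).const_mul b)
  simp only [add_mul, mul_assoc]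
  rw [integral_add h42 (h0.const_mul c),
    integral_add ((hI 4).const_mul a) ((hI 2).const_mul b), integral_const_mul,
    integral_const_mul, integral_const_mul, integral_pow_four_mul_gaussPdf_zero hσ,
    integral_sq_mul_gaussPdf_zero hσ, integral_gaussPdf_zero hσ]
  ring

end CenteredGaussian

/-- The Fisher metric `g_{ij} = E[s_i s_j]` of the Gaussian family in the coordinates `(μ, σ²)`. -/
noncomputable def gaussFisher (μ σ : ℝ) (i j : Fin 2) : ℝ :=
  ∫ x, score μ σ i x * score μ σ j x * gaussPdf μ σ x

section GaussFisher

variable {σ : ℝ}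

theorem gaussFisher_eq_gaussFisher_zero (μ σ : ℝ) (i j : Fin 2) :
    gaussFisher μ σ i j = gaussFisher 0 σ i j := by
  rw [gaussFisher, gaussFisher]
  simp only [score_sub μ σ, gaussPdf_sub μ σ]
  exact integral_sub_right_eq_self (fun x => score 0 σ i x * score 0 σ j x * gaussPdf 0 σ x) μ

theorem gaussFisher_zero_zero (μ : ℝ) (hσ : 0 < σ) : gaussFisher μ σ 0 0 = 1 / σ ^ 2 := by
  have h : ∀ x, score 0 σ 0 x * score 0 σ 0 x = 0 * x ^ 4 + (σ ^ 4)⁻¹ * x ^ 2 + 0 := by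
    intro x
    simp only [score, Matrix.cons_val_zero, sub_zero]
    ring
  rw [gaussFisher_eq_gaussFisher_zero, gaussFisher]
  simp_rw [h]
  rw [integral_even_quartic_mul_gaussPdf_zero hσ]
  field_simp
  ring

theorem gaussFisher_zero_one (μ σ : ℝ) : gaussFisher μ σ 0 1 = 0 := by
  rw [gaussFisher_eq_gaussFisher_zero, gaussFisher]
  refine integral_eq_zero_of_odd fun x => ?_
  simp only [score, gaussPdf, Matrix.cons_val_zero, Matrix.cons_val_one, Matrix.cons_val_fin_one,
    sub_zero, neg_sq]
  ring

theorem gaussFisher_one_one (μ : ℝ) (hσ : 0 < σ) : gaussFisher μ σ 1 1 = 1 / (2 * σ ^ 4) := by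
  have h : ∀ x, score 0 σ 1 x * score 0 σ 1 x
      = (4 * σ ^ 8)⁻¹ * x ^ 4 + -(2 * σ ^ 6)⁻¹ * x ^ 2 + (4 * σ ^ 4)⁻¹ := by
    intro x
    simp only [score, Matrix.cons_val_one, Matrix.cons_val_fin_one, sub_zero]
    field_simp
    ring
  rw [gaussFisher_eq_gaussFisher_zero, gaussFisher]
  simp_rw [h]
  rw [integral_even_quartic_mul_gaussPdf_zero hσ]
  field_simp
  ring

theorem gaussFisher_det (μ : ℝ) (hσ : 0 < σ) :
    gaussFisher μ σ 0 0 * gaussFisher μ σ 1 1 - gaussFisher μ σ 0 1 ^ 2 = 1 / (2 * (σ ^ 3) ^ 2) := by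
  rw [gaussFisher_zero_zero μ hσ, gaussFisher_one_one μ hσ, gaussFisher_zero_one]
  field_simp
  ring

end GaussFisher

theorem gaussian_weyl_prior_uniform (μ σ : ℝ) (hσ : 0 < σ)
    (G : Fin 2 → Fin 2 → ℝ)
    (hG : ∀ i j, G i j = ∫ x : ℝ, score μ σ i x * score μ σ j x * gaussPdf μ σ x) :
    (σ ^ 2) ^ ((3 : ℝ) / 2) * Real.sqrt (G 0 0 * G 1 1 - G 0 1 ^ 2) = 1 / Real.sqrt 2 := by
  obtain rfl : G = gaussFisher μ σ := funext₂ hG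
  have hpow : (σ ^ 2) ^ ((3 : ℝ) / 2) = σ ^ 3 := by
    rw [← rpow_natCast σ 2, ← rpow_mul hσ.le]
    norm_num
  rw [gaussFisher_det μ hσ, hpow, sqrt_div' _ (by positivity), sqrt_mul' _ (by positivity),
    sqrt_sq (by positivity), sqrt_one]
  field_simp
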